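/- arXiv:2310.00232 — 3 statements merged into one kernel-verified Lean document; each statement's English description precedes it below -/
import Mathlib

section
/- For every real number x > -1, it holds that (1+x)·log(1+x) − x ≥ (1/2)·x²/(1 + x/3). -/
/-!
Let `g x = (1 + x) log (1 + x) - x - x² / (2 (1 + x/3))`. Then `g 0 = g' 0 = 0` and
`g'' x = 1 / (1 + x) - 27 / (3 + x)³`, which is nonnegative on `(-1, ∞)` because
`(3 + x)³ - 27 (1 + x) = x² (x + 9)`. So `g` is convex there and attains its minimum `0` at `0`.
-/

open Real Set

lemma ConvexOn.isMinOn_of_hasDerivAt_eq_zero {S : Set ℝ} {f : ℝ → ℝ} {x : ℝ}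
    (hf : ConvexOn ℝ S f) (hx : x ∈ interior S) (hd : HasDerivAt f 0 x) : IsMinOn f S x :=
  hf.isMinOn_of_rightDeriv_eq_zero hx (hd.hasDerivWithinAt.derivWithin (uniqueDiffWithinAt_Ioi x))

noncomputable def pinskerGap (x : ℝ) : ℝ :=
  (1 + x) * log (1 + x) - x - 1 / 2 * x ^ 2 / (1 + x / 3)

lemma hasDerivAt_pinskerGap {x : ℝ} (hx : -1 < x) :
    HasDerivAt pinskerGap (log (1 + x) - 3 / 2 * x * (x + 6) / (3 + x) ^ 2) x := by
  have h1 : 1 + x ≠ 0 := by linarith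
  have h3 : 1 + x / 3 ≠ 0 := by linarith
  refine (((((hasDerivAt_id x).const_add 1).mul (((hasDerivAt_id x).const_add 1).log h1)).sub
    (hasDerivAt_id x)).sub ((((hasDerivAt_id x).pow 2).const_mul (1 / 2)).div
      (((hasDerivAt_id x).div_const 3).const_add 1) h3)).congr_deriv ?_
  simp only [id, Pi.pow_apply]
  field_simp
  ring

lemma hasDerivAt_deriv_pinskerGap {x : ℝ} (hx : -1 < x) :
    HasDerivAt (fun y => log (1 + y) - 3 / 2 * y * (y + 6) / (3 + y) ^ 2)
      (1 / (1 + x) - 27 / (3 + x) ^ 3) x := by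
  have h1 : 1 + x ≠ 0 := by linarith
  have h3 : 3 + x ≠ 0 := by linarith
  refine ((((hasDerivAt_id x).const_add 1).log h1).sub
    ((((hasDerivAt_id x).const_mul (3 / 2)).mul ((hasDerivAt_id x).add_const 6)).div
      (((hasDerivAt_id x).const_add 3).pow 2) (pow_ne_zero 2 h3))).congr_deriv ?_
  simp only [id, Pi.pow_apply, Pi.mul_apply]
  field_simp
  ring

lemma convexOn_pinskerGap : ConvexOn ℝ (Ioi (-1)) pinskerGap := by
  refine convexOn_of_hasDerivWithinAt2_nonneg (convex_Ioi _)
    (fun x hx => (hasDerivAt_pinskerGap hx).continuousAt.continuousWithinAt)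
    (fun x hx => (hasDerivAt_pinskerGap (by simpa using hx)).hasDerivWithinAt)
    (fun x hx => (hasDerivAt_deriv_pinskerGap (by simpa using hx)).hasDerivWithinAt)
    (fun x hx => ?_)
  rw [interior_Ioi, mem_Ioi] at hx
  have h1 : 0 < 1 + x := by linarith
  have h3 : 0 < 3 + x := by linarith
  have hcube : (3 + x) ^ 3 - 27 * (1 + x) = x ^ 2 * (x + 9) := by ring
  rw [sub_nonneg, div_le_div_iff₀ (pow_pos h3 3) h1]
  nlinarith [sq_nonneg x]

theorem pinsker_aux (x : ℝ) (hx : x > -1) :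
    (1 + x) * Real.log (1 + x) - x ≥ (1 / 2) * x ^ 2 / (1 + x / 3) := by
  have hmin : IsMinOn pinskerGap (Ioi (-1)) 0 :=
    convexOn_pinskerGap.isMinOn_of_hasDerivAt_eq_zero (by simp)
      (by simpa using hasDerivAt_pinskerGap (x := 0) (by norm_num))
  have hgap : pinskerGap 0 ≤ pinskerGap x := hmin (mem_Ioi.mpr hx)
  norm_num [pinskerGap] at hgap
  linarith
end

section
/- Let R be a nonnegative real-valued random variable with E[R] = 1. Then (E|R−1|)² ≤ 2·E[R·log R] (with the convention 0·log 0 = 0). -/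
/-!
With `klFun x = x log x + 1 - x`, the elementary inequality
`3 (x - 1)² ≤ 2 (x + 2) klFun x` for `x ≥ 0` (the bound `(1+u) log (1+u) - u ≥ u² / (2 (1 + u/3))`
at `u = x - 1`) and AM-GM give, for every `c > 0`, the pointwise bound
`|R - 1| ≤ c (R + 2) / 3 + klFun R / (2c)`. Since `E[R] = 1`, taking expectations yields
`E|R - 1| ≤ c + E[R log R] / (2c)`, and the choice `c = E|R - 1| / 2` gives the claim.
This is Cauchy–Schwarz with weight `√((R + 2) / 3)`, with the optimisation over `c` done by hand.
-/

open MeasureTheory Real Set InformationTheory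

lemma monotoneOn_add_one_mul_log_sub_two_mul :
    MonotoneOn (fun x : ℝ => (x + 1) * log x - 2 * (x - 1)) (Ioi 0) := by
  have hderiv {x : ℝ} (hx : 0 < x) :
      HasDerivAt (fun x : ℝ => (x + 1) * log x - 2 * (x - 1)) (log x - (1 - x⁻¹)) x := by
    refine ((((hasDerivAt_id' x).add_const 1).mul (hasDerivAt_log hx.ne')).sub
      (((hasDerivAt_id' x).sub_const 1).const_mul 2)).congr_deriv ?_
    field_simp
    ring
  refine monotoneOn_of_hasDerivWithinAt_nonneg (convex_Ioi 0)
    (fun x hx => (hderiv hx).continuousAt.continuousWithinAt)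
    (fun x hx => (hderiv (by simpa using hx)).hasDerivWithinAt) (fun x hx => ?_)
  rw [interior_Ioi] at hx
  linarith [one_sub_inv_le_log_of_pos hx]

lemma three_mul_sq_sub_one_le_mul_klFun {x : ℝ} (hx : 0 ≤ x) :
    3 * (x - 1) ^ 2 ≤ 2 * (x + 2) * klFun x := by
  set g : ℝ → ℝ := fun x => (x + 1) * log x - 2 * (x - 1)
  set φ : ℝ → ℝ := fun x => 2 * (x + 2) * klFun x - 3 * (x - 1) ^ 2
  have hderiv {x : ℝ} (hx : 0 < x) : HasDerivAt φ (4 * g x) x := by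
    refine ((((hasDerivAt_id' x).add_const 2).const_mul 2 |>.mul (hasDerivAt_klFun hx.ne')).sub
      ((((hasDerivAt_id' x).sub_const 1).pow 2).const_mul 3)).congr_deriv ?_
    simp only [g, klFun_apply]
    ring
  have hg : MonotoneOn g (Ioi 0) := monotoneOn_add_one_mul_log_sub_two_mul
  have hg1 : g 1 = 0 := by simp [g]
  have hcont : Continuous φ := by
    have := continuous_klFun
    fun_prop
  have hmin : IsMinOn φ (Ici 0) 1 := by
    refine isMinOn_Ici_of_deriv hcont.continuousAt hcont.continuousAt
      (fun x hx => (hderiv hx.1).differentiableAt.differentiableWithinAt)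
      (fun x hx => (hderiv (zero_lt_one.trans hx)).differentiableAt.differentiableWithinAt)
      (fun x hx => ?_) (fun x hx => ?_)
    · have := hg hx.1 (mem_Ioi.2 one_pos) hx.2.le
      rw [(hderiv hx.1).deriv]
      linarith
    · have := hg (mem_Ioi.2 one_pos) (mem_Ioi.2 (zero_lt_one.trans hx)) (le_of_lt hx)
      rw [(hderiv (zero_lt_one.trans hx)).deriv]
      linarith
  simpa [φ, klFun_one] using hmin (mem_Ici.2 hx)

lemma abs_sub_one_le_add_klFun_div {c x : ℝ} (hc : 0 < c) (hx : 0 ≤ x) :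
    |x - 1| ≤ c * (x + 2) / 3 + klFun x / (2 * c) := by
  have hkey := three_mul_sq_sub_one_le_mul_klFun hx
  have h : 6 * c * |x - 1| ≤ 2 * c ^ 2 * (x + 2) + 3 * klFun x := by
    nlinarith [sq_nonneg (2 * c * (x + 2) - 3 * |x - 1|), sq_abs (x - 1)]
  rw [div_add_div _ _ (by norm_num) (by positivity), le_div_iff₀ (by positivity)]
  linarith

lemma sq_le_two_mul_of_forall_le_add_div {L E : ℝ} (hL : 0 ≤ L) (hE : 0 ≤ E)
    (h : ∀ c > 0, L ≤ c + E / (2 * c)) : L ^ 2 ≤ 2 * E := by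
  rcases hL.eq_or_lt with rfl | hL
  · simpa using hE
  · have hc := h (L / 2) (by positivity)
    have : L / 2 ≤ E / L := by rw [show 2 * (L / 2) = L by ring] at hc; linarith
    rw [le_div_iff₀ hL] at this
    linarith

section
variable {Ω : Type*} [MeasurableSpace Ω] {μ : Measure Ω} [IsProbabilityMeasure μ] {R : Ω → ℝ}

lemma integral_abs_sub_one_le_add_integral_klFun_div (hint : Integrable R μ)
    (hpos : ∀ᵐ ω ∂μ, 0 ≤ R ω) (hmean : ∫ ω, R ω ∂μ = 1)
    (hkl : Integrable (fun ω => klFun (R ω)) μ) {c : ℝ} (hc : 0 < c) :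
    ∫ ω, |R ω - 1| ∂μ ≤ c + (∫ ω, klFun (R ω) ∂μ) / (2 * c) := by
  have hlin : Integrable (fun ω => c * (R ω + 2) / 3) μ :=
    ((hint.add (integrable_const 2)).const_mul c).div_const 3
  calc ∫ ω, |R ω - 1| ∂μ
      ≤ ∫ ω, (c * (R ω + 2) / 3 + klFun (R ω) / (2 * c)) ∂μ := by
        refine integral_mono_ae (hint.sub (integrable_const 1)).abs (hlin.add (hkl.div_const _)) ?_
        filter_upwards [hpos] with ω hω using abs_sub_one_le_add_klFun_div hc hω
    _ = c + (∫ ω, klFun (R ω) ∂μ) / (2 * c) := by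
        rw [integral_add hlin (hkl.div_const _), integral_div, integral_div, integral_const_mul,
          integral_add hint (integrable_const 2), hmean]
        simp only [integral_const, probReal_univ, smul_eq_mul, one_mul, add_left_inj]
        ring

lemma integral_mul_log_eq_integral_klFun (hint : Integrable R μ) (hmean : ∫ ω, R ω ∂μ = 1)
    (hent : Integrable (fun ω => R ω * log (R ω)) μ) :
    ∫ ω, R ω * log (R ω) ∂μ = ∫ ω, klFun (R ω) ∂μ := by
  simp only [klFun_apply]
  have hent' : Integrable (fun ω => R ω * log (R ω) + 1) μ := hent.add (integrable_const 1)
  rw [integral_sub hent' hint, integral_add hent (integrable_const 1), hmean]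
  simp

end

theorem pinsker_type_inequality {Ω : Type*} [MeasurableSpace Ω]
    (μ : Measure Ω) [IsProbabilityMeasure μ] (R : Ω → ℝ)
    (hint : Integrable R μ)
    (hpos : ∀ᵐ ω ∂μ, 0 ≤ R ω)
    (hmean : ∫ ω, R ω ∂μ = 1)
    (hent : Integrable (fun ω => R ω * Real.log (R ω)) μ) :
    (∫ ω, |R ω - 1| ∂μ) ^ 2 ≤ 2 * ∫ ω, R ω * Real.log (R ω) ∂μ := by
  have hkl : Integrable (fun ω => klFun (R ω)) μ := (hent.add (integrable_const 1)).sub hint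
  rw [integral_mul_log_eq_integral_klFun hint hmean hent]
  exact sq_le_two_mul_of_forall_le_add_div (integral_nonneg fun _ => abs_nonneg _)
    (integral_nonneg_of_ae (hpos.mono fun _ hω => klFun_nonneg hω))
    fun c hc => integral_abs_sub_one_le_add_integral_klFun_div hint hpos hmean hkl hc
end

section
/- Let θ, c₂, α > 0 with θc₂ > α/2, and set η_k = θ/k, t_n = ∑_{k=1}^n η_k. Then there exists a constant C = C(θ, c₂, α) such that for all n ≥ 2: ∑_{k=1}^{⌊(n−1)/2⌋} e^{−c₂(t_n−t_k)} (t_n−t_k)^{−1/2} η_k^{1+α/2} ≤ C n^{−α/2}. -/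
/-!
Comparing the harmonic sum with `∫ dx / x` gives `t_n - t_k ≥ θ log ((n + 1) / (k + 1))`.
For `k ≤ (n - 1) / 2` this is at least `θ log 2`, which bounds `(t_n - t_k)^(-1/2)` by a
constant, and it turns `exp (-c₂ (t_n - t_k))` into `(2k / n)^(θ c₂)`. Each term is then
`O(n^(-θ c₂) k^(β - 1))` with `β = θ c₂ - α / 2 > 0`, and `∑_{k ≤ m} k^(β - 1) = O(m^β)`.
-/

/-- `tpartial θ n = ∑_{k=1}^n θ/k`. -/
noncomputable def tpartial (θ : ℝ) (n : ℕ) : ℝ := ∑ k ∈ Finset.Icc 1 n, θ / k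

open Real Finset

lemma tpartial_sub_tpartial (θ : ℝ) {k n : ℕ} (hkn : k ≤ n) :
    tpartial θ n - tpartial θ k = θ * ∑ j ∈ Ioc k n, (j : ℝ)⁻¹ := by
  have hIcc : ∀ N : ℕ, Icc 1 N = Ioc 0 N := Icc_add_one_left_eq_Ioc 0
  simp only [tpartial, hIcc, mul_sum, div_eq_mul_inv]
  linarith [sum_Ioc_consecutive (fun j : ℕ => θ * (j : ℝ)⁻¹) k.zero_le hkn]

lemma log_div_le_sum_Ioc_inv {k n : ℕ} (hkn : k ≤ n) :
    log ((n + 1) / (k + 1)) ≤ ∑ j ∈ Ioc k n, (j : ℝ)⁻¹ := by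
  have hzero : (0 : ℝ) ∉ Set.uIcc ((k + 1 : ℕ) : ℝ) ((n + 1 : ℕ) : ℝ) := by
    rw [Set.uIcc_of_le (by gcongr)]
    exact fun h => by linarith [h.1, show (0 : ℝ) < ((k + 1 : ℕ) : ℝ) by positivity]
  calc log ((n + 1) / (k + 1)) = ∫ x in ((k + 1 : ℕ) : ℝ)..((n + 1 : ℕ) : ℝ), x⁻¹ := by
        rw [integral_inv hzero]; push_cast; rfl
    _ ≤ ∑ j ∈ Ico (k + 1) (n + 1), (j : ℝ)⁻¹ :=
        (inv_antitoneOn_Icc_right (by positivity)).integral_le_sum_Ico (by omega)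
    _ = ∑ j ∈ Ioc k n, (j : ℝ)⁻¹ := by rw [Ico_add_one_add_one_eq_Ioc]

lemma mul_log_div_le_tpartial_sub {θ : ℝ} (hθ : 0 ≤ θ) {k n : ℕ} (hkn : k ≤ n) :
    θ * log ((n + 1) / (k + 1)) ≤ tpartial θ n - tpartial θ k := by
  rw [tpartial_sub_tpartial θ hkn]
  exact mul_le_mul_of_nonneg_left (log_div_le_sum_Ioc_inv hkn) hθ

lemma mul_rpow_sub_one_le_rpow_sub_rpow {γ : ℝ} (hγ0 : 0 ≤ γ) (hγ1 : γ ≤ 1) {x : ℝ}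
    (hx : 0 ≤ x) :
    γ * (x + 1) ^ (γ - 1) ≤ (x + 1) ^ γ - x ^ γ := by
  have hx1 : 0 < x + 1 := by positivity
  -- Bernoulli's inequality applied to `x / (x + 1) = 1 - 1 / (x + 1)`
  have hbern : (x / (x + 1)) ^ γ ≤ 1 - γ / (x + 1) := by
    have h := rpow_one_add_le_one_add_mul_self (s := -(x + 1)⁻¹)
      (by linarith [inv_le_one_of_one_le₀ (by linarith : (1 : ℝ) ≤ x + 1)]) hγ0 hγ1
    convert h using 2 <;> field_simp <;> ring
  rw [div_rpow hx hx1.le, div_le_iff₀ (rpow_pos_of_pos hx1 γ)] at hbern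
  rw [rpow_sub_one hx1.ne']
  linarith [show (1 - γ / (x + 1)) * (x + 1) ^ γ = (x + 1) ^ γ - γ * ((x + 1) ^ γ / (x + 1)) by
    ring]

lemma sum_Icc_rpow_sub_one_le_of_le_one {γ : ℝ} (hγ0 : 0 < γ) (hγ1 : γ ≤ 1) (m : ℕ) :
    ∑ k ∈ Icc 1 m, (k : ℝ) ^ (γ - 1) ≤ m ^ γ / γ := by
  induction m with
  | zero => simp [zero_rpow hγ0.ne']
  | succ m ih =>
    rw [sum_Icc_succ_top (by omega), le_div_iff₀ hγ0]
    rw [le_div_iff₀ hγ0] at ih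
    have := mul_rpow_sub_one_le_rpow_sub_rpow hγ0.le hγ1 m.cast_nonneg
    push_cast
    linarith

lemma sum_Icc_rpow_sub_one_le {β : ℝ} (hβ : 0 < β) (m : ℕ) :
    ∑ k ∈ Icc 1 m, (k : ℝ) ^ (β - 1) ≤ m ^ β / min β 1 := by
  set γ := min β 1
  have hγ0 : 0 < γ := lt_min hβ one_pos
  -- `k ^ (β - 1) = k ^ (β - γ) * k ^ (γ - 1)` and the first factor is at most `m ^ (β - γ)`
  calc ∑ k ∈ Icc 1 m, (k : ℝ) ^ (β - 1)
      ≤ ∑ k ∈ Icc 1 m, (m : ℝ) ^ (β - γ) * (k : ℝ) ^ (γ - 1) := by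
        refine sum_le_sum fun k hk => ?_
        obtain ⟨hk1, hkm⟩ := mem_Icc.mp hk
        have hk0 : (0 : ℝ) < k := by exact_mod_cast hk1
        rw [show β - 1 = (β - γ) + (γ - 1) by ring, rpow_add hk0]
        gcongr
        linarith [min_le_left β 1]
    _ ≤ (m : ℝ) ^ (β - γ) * (m ^ γ / γ) := by
        rw [← mul_sum]
        gcongr
        exact sum_Icc_rpow_sub_one_le_of_le_one hγ0 (min_le_right β 1) m
    _ = m ^ β / γ := by
        rcases m.eq_zero_or_pos with rfl | hm
        · simp [zero_rpow hβ.ne', zero_rpow hγ0.ne']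
        · rw [mul_div_assoc', ← rpow_add (by exact_mod_cast hm), sub_add_cancel]

lemma mul_log_two_le_tpartial_sub {θ : ℝ} (hθ : 0 ≤ θ) {k n : ℕ} (hkn : 2 * k + 1 ≤ n) :
    θ * log 2 ≤ tpartial θ n - tpartial θ k := by
  refine le_trans ?_ (mul_log_div_le_tpartial_sub hθ (by omega : k ≤ n))
  gcongr
  rw [le_div_iff₀ (by positivity)]
  exact_mod_cast (by omega : 2 * (k + 1) ≤ n + 1)

lemma exp_neg_mul_tpartial_sub_le {θ c : ℝ} (hθ : 0 ≤ θ) (hc : 0 ≤ c) {k n : ℕ} (hk : 1 ≤ k)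
    (hkn : k ≤ n) :
    exp (-c * (tpartial θ n - tpartial θ k)) ≤ (2 * k / n) ^ (θ * c) := by
  have hn0 : (0 : ℝ) < n := by exact_mod_cast hk.trans hkn
  calc exp (-c * (tpartial θ n - tpartial θ k))
      ≤ exp (log ((k + 1) / (n + 1)) * (θ * c)) := by
        rw [exp_le_exp, ← inv_div, log_inv]
        nlinarith [mul_log_div_le_tpartial_sub hθ hkn]
    _ = ((k + 1) / (n + 1)) ^ (θ * c) := (rpow_def_of_pos (by positivity) _).symm
    _ ≤ (2 * k / n) ^ (θ * c) := by
        gcongr <;> linarith [show (1 : ℝ) ≤ k by exact_mod_cast hk]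

lemma tail_term_le {θ c : ℝ} (hθ : 0 < θ) (hc : 0 ≤ c) (p : ℝ) {k n : ℕ} (hk : 1 ≤ k)
    (hkn : 2 * k + 1 ≤ n) :
    exp (-c * (tpartial θ n - tpartial θ k)) * (tpartial θ n - tpartial θ k) ^ (-(1 / 2) : ℝ) *
        (θ / k) ^ p ≤
      2 ^ (θ * c) * (θ * log 2) ^ (-(1 / 2) : ℝ) * θ ^ p *
        ((n : ℝ) ^ (-(θ * c)) * (k : ℝ) ^ (θ * c - p)) := by
  have hk0 : (0 : ℝ) < k := by exact_mod_cast hk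
  have hn0 : (0 : ℝ) < n := by exact_mod_cast (by omega : 0 < n)
  have hlog2 : 0 < θ * log 2 := mul_pos hθ (log_pos one_lt_two)
  calc exp (-c * (tpartial θ n - tpartial θ k)) * (tpartial θ n - tpartial θ k) ^ (-(1 / 2) : ℝ) *
        (θ / k) ^ p
      ≤ (2 * k / n) ^ (θ * c) * (θ * log 2) ^ (-(1 / 2) : ℝ) * (θ / k) ^ p := by
        have hΔ := mul_log_two_le_tpartial_sub hθ.le hkn
        have hexp := exp_neg_mul_tpartial_sub_le hθ.le hc hk (by omega : k ≤ n)
        have hrpow := rpow_le_rpow_of_nonpos hlog2 hΔ (by norm_num : -(1 / 2 : ℝ) ≤ 0)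
        gcongr
        exact rpow_nonneg (hlog2.le.trans hΔ) _
    _ = _ := by
        rw [div_rpow (by positivity) hn0.le, mul_rpow zero_le_two hk0.le, div_rpow hθ.le hk0.le,
          rpow_sub hk0, rpow_neg hn0.le]
        field_simp

theorem tail_sum_bound_general (θ c₂ α : ℝ) (hθ : 0 < θ) (hc₂ : 0 < c₂)
    (hθc₂ : α / 2 < θ * c₂) :
    ∃ C : ℝ, 0 < C ∧ ∀ n : ℕ, 2 ≤ n →
      ∑ k ∈ Finset.Icc 1 ((n - 1) / 2),
          Real.exp (-c₂ * (tpartial θ n - tpartial θ k)) *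
            (tpartial θ n - tpartial θ k) ^ (-(1 / 2) : ℝ) *
            (θ / k) ^ (1 + α / 2)
        ≤ C * (n : ℝ) ^ (-(α / 2)) := by
  set β := θ * c₂ - α / 2 with hβ_def
  have hβ : 0 < β := sub_pos.mpr hθc₂
  set K := 2 ^ (θ * c₂) * (θ * log 2) ^ (-(1 / 2) : ℝ) * θ ^ (1 + α / 2)
  have hK : 0 < K := by positivity
  refine ⟨K / min β 1, by positivity, fun n hn => ?_⟩
  have hn0 : (0 : ℝ) < n := by positivity
  calc _ ≤ ∑ k ∈ Icc 1 ((n - 1) / 2), K * ((n : ℝ) ^ (-(θ * c₂)) * (k : ℝ) ^ (β - 1)) := by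
        refine sum_le_sum fun k hk => ?_
        obtain ⟨hk1, hkm⟩ := mem_Icc.mp hk
        refine (tail_term_le hθ hc₂.le (1 + α / 2) hk1 (by omega)).trans_eq ?_
        rw [show θ * c₂ - (1 + α / 2) = β - 1 by linear_combination -hβ_def]
    _ = K * n ^ (-(θ * c₂)) * ∑ k ∈ Icc 1 ((n - 1) / 2), (k : ℝ) ^ (β - 1) := by
        rw [mul_sum]; simp only [mul_assoc]
    _ ≤ K * n ^ (-(θ * c₂)) * ((n : ℝ) ^ β / min β 1) := by
        gcongr
        refine (sum_Icc_rpow_sub_one_le hβ _).trans ?_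
        gcongr
        exact_mod_cast Nat.div_le_self _ _ |>.trans (Nat.sub_le n 1)
    _ = K / min β 1 * (n : ℝ) ^ (-(α / 2)) := by
        rw [show -(α / 2) = -(θ * c₂) + β by linear_combination -hβ_def, rpow_add hn0]
        ring

theorem tail_sum_bound (θ c₂ α : ℝ) (hθ : 0 < θ) (hc₂ : 0 < c₂) (hα : 0 < α)
    (hθc₂ : α / 2 < θ * c₂) :
    ∃ C : ℝ, 0 < C ∧ ∀ n : ℕ, 2 ≤ n →
      ∑ k ∈ Finset.Icc 1 ((n - 1) / 2),
          Real.exp (-c₂ * (tpartial θ n - tpartial θ k)) *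
            (tpartial θ n - tpartial θ k) ^ (-(1 / 2) : ℝ) *
            (θ / k) ^ (1 + α / 2)
        ≤ C * (n : ℝ) ^ (-(α / 2)) :=
  tail_sum_bound_general θ c₂ α hθ hc₂ hθc₂
end
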